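/- arXiv:2008.04864 — 12 statements merged into one kernel-verified Lean document; each statement's English description precedes it below -/
import Mathlib

section
/- Let A, B be elements of a ring with unit, and let A⁻, B⁻ satisfy A A⁻ A = A and B B⁻ B = B. If B B⁻ (1 − A⁻A) = 1 − A⁻A, then A B B⁻ A⁻ A B = A B; that is, B⁻A⁻ is an inner inverse of AB. -/
theorem werner_inner_inverse {R : Type*} [Ring R] (A B Am Bm : R)
    (hA : A * Am * A = A) (hB : B * Bm * B = B)
    (h : B * Bm * (1 - Am * A) = 1 - Am * A) :
    A * B * Bm * Am * A * B = A * B := by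
  have h1 : B * Bm * (Am * A) = B * Bm - (1 - Am * A) := by
    rw [← h]; noncomm_ring
  calc A * B * Bm * Am * A * B = A * (B * Bm * (Am * A)) * B := by noncomm_ring
    _ = A * (B * Bm - (1 - Am * A)) * B := by rw [h1]
    _ = A * (B * Bm * B) - A * B + A * Am * A * B := by noncomm_ring
    _ = A * B := by rw [hB, hA]; noncomm_ring
end

section
/- Let m be an element of a ring with involution, right *-cancellable, and let m̃ be an element such that m m̃ is idempotent, m̃ ∈ R m* (i.e., m̃ = u m* for some u), and m* ∈ m̃ R (i.e., m* = m̃ v for some v). Then m is Moore-Penrose invertible with m† = m̃. -/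
variable {R : Type*} [Ring R] [StarRing R]

/-- `b` is a Moore-Penrose inverse of `a`. -/
def IsMPInv (a b : R) : Prop :=
  a * b * a = a ∧ b * a * b = b ∧ star (a * b) = a * b ∧ star (b * a) = b * a

theorem mp_of_idempotent_factorizations (m mt : R)
    (hcanc : ∀ z : R, z * (m * star m) = 0 → z * m = 0)
    (hidem : (m * mt) * (m * mt) = m * mt)
    (h1 : ∃ u : R, mt = u * star m)
    (h2 : ∃ v : R, star m = mt * v) :
    IsMPInv m mt := by
  obtain ⟨u, hu⟩ := h1
  obtain ⟨v, hv⟩ := h2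
  -- Step 1 : m * mt * m = m
  have hmm : m * star m = (m * mt) * v := by
    rw [hv]; noncomm_ring
  have hz : (m * mt - 1) * (m * star m) = 0 := by
    rw [hmm]
    have : (m * mt - 1) * (m * mt * v) = ((m * mt) * (m * mt)) * v - (m * mt) * v := by
      noncomm_ring
    rw [this, hidem, sub_self]
  have hz' := hcanc _ hz
  have h3 : m * mt * m = m := by
    have : (m * mt - 1) * m = m * mt * m - m := by noncomm_ring
    rw [this] at hz'
    linear_combination (norm := noncomm_ring) hz'
  -- Step 2 : star (m * mt) = m * mt
  have hestar : star (m * mt) = m * (star u * star m) := by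
    rw [hu]; simp [mul_assoc]
  have hemdiff : (m * mt) * (m * mt - star (m * mt)) = m * mt - star (m * mt) := by
    have h4 : (m * mt) * (m * mt - star (m * mt))
        = (m * mt * m) * (mt - star u * star m) := by
      rw [hestar, hu]; noncomm_ring
    rw [h4, h3, hestar, hu]; noncomm_ring
  have hee : (m * mt) * star (m * mt) = star (m * mt) := by
    have := hemdiff
    rw [mul_sub, hidem] at this
    exact sub_right_inj.mp this
  have hsym : star (m * mt) = m * mt := by
    have hsa : star ((m * mt) * star (m * mt)) = (m * mt) * star (m * mt) := by
      simp [star_mul]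
    rw [hee, star_star] at hsa
    exact hsa.symm
  -- Step 3 : mt * m * mt = mt
  have hsm : star mt * star m * m = m := by
    have : star mt * star m = m * mt := by rw [← star_mul, hsym]
    rw [this, h3]
  have hsm' : star m * m * mt = star m := by
    have := congrArg star hsm
    simpa [star_mul, mul_assoc] using this
  have h5 : mt * m * mt = mt := by
    calc mt * m * mt = u * (star m * m * mt) := by rw [hu]; noncomm_ring
      _ = u * star m := by rw [hsm']
      _ = mt := hu.symm
  -- Step 4 : star (mt * m) = mt * m
  have hf : (mt * m) * star m = star m := by
    calc (mt * m) * star m = (mt * m * mt) * v := by rw [hv]; noncomm_ring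
      _ = mt * v := by rw [h5]
      _ = star m := hv.symm
  have hf' : m * star (mt * m) = m := by
    have := congrArg star hf
    simpa [star_mul, mul_assoc] using this
  have hff : (mt * m) * star (mt * m) = mt * m := by
    calc (mt * m) * star (mt * m) = mt * (m * star (mt * m)) := by noncomm_ring
      _ = mt * m := by rw [hf']
  have hfsym : star (mt * m) = mt * m := by
    have hsa : star ((mt * m) * star (mt * m)) = (mt * m) * star (mt * m) := by
      simp [star_mul]
    rw [hff] at hsa
    exact hsa
  exact ⟨h3, h5, hsym, hfsym⟩
end

section
/- Let m be a right *-cancellable element of a ring with involution and m̃ such that m m̃ m = m (m̃ is an inner inverse of m), m̃ ∈ R m*, and m* ∈ m̃ R. Then m is Moore-Penrose invertible with m† = m̃. -/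
variable {R : Type*} [Ring R] [StarRing R]

theorem mp_of_inner_inverse_factorizations (m mt : R)
    (hcanc : ∀ z : R, z * (m * star m) = 0 → z * m = 0)
    (hinner : m * mt * m = m)
    (h1 : ∃ u : R, mt = u * star m)
    (h2 : ∃ v : R, star m = mt * v) :
    IsMPInv m mt := by
  obtain ⟨u, hu⟩ := h1
  obtain ⟨v, hv⟩ := h2
  have aux : ∀ p : R, p * star p = star p → star p = p := by
    intro p h
    have h2 := congrArg star h
    simp only [star_mul, star_star] at h2
    exact h.symm.trans h2
  have hstarmt : star mt = m * star u := by rw [hu, star_mul, star_star]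
  -- m * mt is self-adjoint
  have hpp : (m * mt) * star (m * mt) = star (m * mt) := by
    rw [star_mul, hstarmt]
    simp only [← mul_assoc]
    rw [hinner]
  have hp : star (m * mt) = m * mt := aux _ hpp
  -- mt * m * mt = mt
  have hmtm : mt * m * mt = mt := by
    apply star_injective
    rw [star_mul, star_mul, ← mul_assoc, ← star_mul, hp, hstarmt]
    simp only [← mul_assoc]
    rw [hinner]
  -- mt * m is self-adjoint
  have hqq : (mt * m) * star (mt * m) = star (mt * m) := by
    rw [star_mul, hv]
    simp only [← mul_assoc]
    rw [hmtm]
  have hq : star (mt * m) = mt * m := aux _ hqq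
  exact ⟨hinner, hmtm, hp, hq⟩
end

section
/- Let m be an element of a ring with involution and m̃ such that m̃ m m̃ = m̃ (m̃ is an outer inverse of m), m̃ ∈ R m*, and m* ∈ m̃ R. Then m is Moore-Penrose invertible with m† = m̃. -/
variable {R : Type*} [Ring R] [StarRing R]

theorem mp_of_outer_inverse_factorizations (m mt : R)
    (houter : mt * m * mt = mt)
    (h1 : ∃ u : R, mt = u * star m)
    (h2 : ∃ v : R, star m = mt * v) :
    IsMPInv m mt := by
  obtain ⟨u, hu⟩ := h1
  obtain ⟨v, hv⟩ := h2
  -- p = mt * m is hermitian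
  have hsp : star (mt * m) = mt * v * star mt := by rw [star_mul, ← hv]
  have key1 : (mt * m) * star (mt * m) = star (mt * m) := by
    rw [hsp]
    calc mt * m * (mt * v * star mt) = (mt * m * mt) * (v * star mt) := by noncomm_ring
      _ = mt * v * star mt := by rw [houter]; noncomm_ring
  have hp : star (mt * m) = mt * m := by
    have := congrArg star key1
    rw [star_mul, star_star, key1] at this
    exact this
  -- m * mt * m = m
  have hm : m * mt * m = m := by
    have h3 : (mt * m) * star m = star m := by
      rw [hv]
      calc mt * m * (mt * v) = (mt * m * mt) * v := by noncomm_ring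
        _ = mt * v := by rw [houter]
    have h4 := congrArg star h3
    rw [star_mul, star_star, hp] at h4
    rw [mul_assoc]
    exact h4
  -- q = m * mt is hermitian
  have hsq : star (m * mt) = m * star u * star m := by
    rw [star_mul, hu, star_mul, star_star]
  have key2 : (m * mt) * star (m * mt) = star (m * mt) := by
    rw [hsq]
    calc m * mt * (m * star u * star m) = (m * mt * m) * (star u * star m) := by noncomm_ring
      _ = m * star u * star m := by rw [hm]; noncomm_ring
  have hq : star (m * mt) = m * mt := by
    have := congrArg star key2
    rw [star_mul, star_star, key2] at this
    exact this
  exact ⟨hm, houter, hq, hp⟩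
end

section
/- Let m be an element of a ring R with involution and let m̃ ∈ R be such that m m̃ m = m, m̃ = u m* for some u ∈ R, and m = v m̃* for some v ∈ R. Then m is Moore-Penrose invertible with m† = m̃. -/
variable {R : Type*} [Ring R] [StarRing R]

theorem mp_of_inner_inverse_factorizations' (m mt : R)
    (hinner : m * mt * m = m)
    (h1 : ∃ u : R, mt = u * star m)
    (h2 : ∃ v : R, m = v * star mt) :
    IsMPInv m mt := by
  obtain ⟨u, hu⟩ := h1
  obtain ⟨v, hv⟩ := h2
  have hmt' : star mt = m * star u := by rw [hu, star_mul, star_star]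
  have hm' : star m = mt * star v := by rw [hv, star_mul, star_star]
  -- (m*mt) * star (m*mt) = m * star u * star m
  have hpp : m * mt * star (m * mt) = m * star u * star m := by
    rw [star_mul, hmt']
    calc m * mt * (m * star u * star m)
        = (m * mt * m) * (star u * star m) := by simp only [mul_assoc]
      _ = m * star u * star m := by rw [hinner, ← mul_assoc]
  -- hence m * mt = (m*mt) * star (m*mt)
  have hpfix : m * mt = m * mt * star (m * mt) := by
    have h := congrArg star hpp
    simp only [star_mul, star_star, mul_assoc] at h
    conv_lhs => rw [hu]
    simp only [star_mul, star_star, mul_assoc]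
    exact h.symm
  have hp : star (m * mt) = m * mt := by
    conv_lhs => rw [hpfix]
    rw [star_mul, star_star]
    exact hpfix.symm
  -- reflexivity
  have hrefl : mt * m * mt = mt := by
    nth_rewrite 1 [hu]
    calc u * star m * m * mt
        = u * (star m * (m * mt)) := by simp only [mul_assoc]
      _ = u * (star m * star (m * mt)) := by rw [hp]
      _ = u * star (m * mt * m) := by rw [star_mul (m * mt) m]
      _ = u * star m := by rw [hinner]
      _ = mt := hu.symm
  -- (mt*m) * star (mt*m) = mt * star v * star mt
  have hqq : mt * m * star (mt * m) = mt * star v * star mt := by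
    rw [star_mul, hm']
    calc mt * m * (mt * star v * star mt)
        = (mt * m * mt) * (star v * star mt) := by simp only [mul_assoc]
      _ = mt * star v * star mt := by rw [hrefl, ← mul_assoc]
  have hqfix : mt * m = mt * m * star (mt * m) := by
    have h := congrArg star hqq
    simp only [star_mul, star_star, mul_assoc] at h
    conv_lhs => rw [hv]
    simp only [star_mul, star_star, mul_assoc]
    exact h.symm
  have hq : star (mt * m) = mt * m := by
    conv_lhs => rw [hqfix]
    rw [star_mul, star_star]
    exact hqfix.symm
  exact ⟨hinner, hrefl, hp, hq⟩
end

section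
/- Let a, b, c be elements of a ring with involution such that a and c are Moore-Penrose invertible, let b̃ ∈ R, and set m = abc, m̃ = c† b̃ a†, p = a† a b c c†, q = c c† b̃ a† a. Then p q is idempotent if and only if m m̃ is idempotent, and p q p = p if and only if m m̃ m = m. -/
variable {R : Type*} [Ring R] [StarRing R]

theorem pq_iff_mmt (a b c bt ad cd : R)
    (ha : IsMPInv a ad) (hc : IsMPInv c cd) :
    (let p := ad * a * b * c * cd
     let q := c * cd * bt * ad * a
     let m := a * b * c
     let mt := cd * bt * ad
     ((p * q) * (p * q) = p * q ↔ (m * mt) * (m * mt) = m * mt) ∧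
     (p * q * p = p ↔ m * mt * m = m)) := by
  intro p q m mt
  obtain ⟨ha1, ha2, -, -⟩ := ha
  obtain ⟨hc1, hc2, -, -⟩ := hc
  have Haa : ∀ x : R, a * (ad * (a * x)) = a * x := by
    intro x; rw [← mul_assoc, ← mul_assoc, ha1]
  have Hada : ∀ x : R, ad * (a * (ad * x)) = ad * x := by
    intro x; rw [← mul_assoc, ← mul_assoc, ha2]
  have Hcc : ∀ x : R, c * (cd * (c * x)) = c * x := by
    intro x; rw [← mul_assoc, ← mul_assoc, hc1]
  have Hcdc : ∀ x : R, cd * (c * (cd * x)) = cd * x := by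
    intro x; rw [← mul_assoc, ← mul_assoc, hc2]
  have Haa' : a * (ad * a) = a := by rw [← mul_assoc, ha1]
  have Hada' : ad * (a * ad) = ad := by rw [← mul_assoc, ha2]
  have Hcdc' : cd * (c * cd) = cd := by rw [← mul_assoc, hc2]
  have Hcc' : c * (cd * c) = c := by rw [← mul_assoc, hc1]
  have h1 : p * q = ad * (m * mt) * a := by
    unfold p q m mt
    simp only [mul_assoc, Hada, Haa, Hcdc, Hcc]
  have h2 : (p * q) * (p * q) = ad * ((m * mt) * (m * mt)) * a := by
    unfold p q m mt
    simp only [mul_assoc, Hada, Haa, Hcdc, Hcc]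
  have h3 : m * mt = a * (p * q) * ad := by
    unfold p q m mt
    simp only [mul_assoc, Hada, Haa, Hcdc, Hcc, Haa', Hcc', Hada', Hcdc']
  have h4 : (m * mt) * (m * mt) = a * ((p * q) * (p * q)) * ad := by
    unfold p q m mt
    simp only [mul_assoc, Hada, Haa, Hcdc, Hcc, Haa', Hcc', Hada', Hcdc']
  constructor
  · constructor
    · intro H; rw [h4, H, ← h3]
    · intro H; rw [h2, H, ← h1]
  · have g1 : p * q * p = ad * (m * mt * m) * cd := by
      unfold p q m mt
      simp only [mul_assoc, Hada, Haa, Hcdc, Hcc, Haa', Hcc', Hada', Hcdc']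
    have g2 : p = ad * m * cd := by
      unfold p m
      simp only [mul_assoc]
    have g3 : m * mt * m = a * (p * q * p) * c := by
      unfold p q m mt
      simp only [mul_assoc, Hada, Haa, Hcdc, Hcc, Haa', Hcc', Hada', Hcdc']
    have g4 : m = a * p * c := by
      unfold p m
      simp only [mul_assoc, Hada, Haa, Hcdc, Hcc, Haa', Hcc', Hada', Hcdc']
    constructor
    · intro H; rw [g3, H, ← g4]
    · intro H; rw [g1, H, ← g2]
end

section
/- Let a, b, c be elements of a ring with involution with a, c Moore-Penrose invertible, b̃ ∈ R, p = a† a b c c†, q = c c† b̃ a† a, m = abc, m̃ = c† b̃ a†. Then a*a p R ⊇ q* R if and only if m̃ ∈ R m*, and c c* p* R ⊆ q R if and only if m* ∈ m̃ R. -/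
variable {R : Type*} [Ring R] [StarRing R]

theorem range_inclusions_iff (a b c bt ad cd : R)
    (ha : IsMPInv a ad) (hc : IsMPInv c cd) :
    (let p := ad * a * b * c * cd
     let q := c * cd * bt * ad * a
     let m := a * b * c
     let mt := cd * bt * ad
     ((∃ u : R, star q = star a * a * p * u) ↔ (∃ w : R, mt = w * star m)) ∧
     ((∃ u : R, c * star c * star p = q * u) ↔ (∃ v : R, star m = mt * v))) := by
  obtain ⟨ha1, ha2, ha3, ha4⟩ := ha
  obtain ⟨hc1, hc2, hc3, hc4⟩ := hc
  -- derived identities for a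
  have A1 : ∀ x : R, a * (ad * (a * x)) = a * x := fun x => by
    rw [← mul_assoc, ← mul_assoc, ha1]
  have A1' : a * (ad * a) = a := by rw [← mul_assoc, ha1]
  have A2 : ∀ x : R, ad * (a * (ad * x)) = ad * x := fun x => by
    rw [← mul_assoc, ← mul_assoc, ha2]
  have A2' : ad * (a * ad) = ad := by rw [← mul_assoc, ha2]
  have A3' : star a * star ad = ad * a := by rw [← star_mul, ha4]
  have A3 : ∀ x : R, star a * (star ad * x) = ad * (a * x) := fun x => by
    rw [← mul_assoc, A3', mul_assoc]
  have A4' : star ad * star a = a * ad := by rw [← star_mul, ha3]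
  have A4 : ∀ x : R, star ad * (star a * x) = a * (ad * x) := fun x => by
    rw [← mul_assoc, A4', mul_assoc]
  have A5' : star a * (a * ad) = star a := by
    rw [← ha3, ← star_mul, ha1]
  have A5 : ∀ x : R, star a * (a * (ad * x)) = star a * x := fun x => by
    rw [← mul_assoc, ← mul_assoc, mul_assoc (star a) a ad, A5']
  have A6' : ad * (a * star a) = star a := by
    rw [← mul_assoc, ← ha4, ← star_mul, ← mul_assoc, ha1]
  have A6 : ∀ x : R, ad * (a * (star a * x)) = star a * x := fun x => by
    rw [← mul_assoc, ← mul_assoc, mul_assoc ad a (star a), A6']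
  -- derived identities for c
  have C1 : ∀ x : R, c * (cd * (c * x)) = c * x := fun x => by
    rw [← mul_assoc, ← mul_assoc, hc1]
  have C1' : c * (cd * c) = c := by rw [← mul_assoc, hc1]
  have C2 : ∀ x : R, cd * (c * (cd * x)) = cd * x := fun x => by
    rw [← mul_assoc, ← mul_assoc, hc2]
  have C2' : cd * (c * cd) = cd := by rw [← mul_assoc, hc2]
  have C3' : star c * star cd = cd * c := by rw [← star_mul, hc4]
  have C3 : ∀ x : R, star c * (star cd * x) = cd * (c * x) := fun x => by
    rw [← mul_assoc, C3', mul_assoc]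
  have C4' : star cd * star c = c * cd := by rw [← star_mul, hc3]
  have C4 : ∀ x : R, star cd * (star c * x) = c * (cd * x) := fun x => by
    rw [← mul_assoc, C4', mul_assoc]
  have C5' : star c * (c * cd) = star c := by
    rw [← hc3, ← star_mul, hc1]
  have C5 : ∀ x : R, star c * (c * (cd * x)) = star c * x := fun x => by
    rw [← mul_assoc, ← mul_assoc, mul_assoc (star c) c cd, C5']
  have C6' : cd * (c * star c) = star c := by
    rw [← mul_assoc, ← hc4, ← star_mul, ← mul_assoc, hc1]
  have C6 : ∀ x : R, cd * (c * (star c * x)) = star c * x := fun x => by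
    rw [← mul_assoc, ← mul_assoc, mul_assoc cd c (star c), C6']
  show ((∃ u : R, star (c * cd * bt * ad * a) = star a * a * (ad * a * b * c * cd) * u) ↔
        (∃ w : R, cd * bt * ad = w * star (a * b * c))) ∧
       ((∃ u : R, c * star c * star (ad * a * b * c * cd) = c * cd * bt * ad * a * u) ↔
        (∃ v : R, star (a * b * c) = cd * bt * ad * v))
  constructor
  · constructor
    · rintro ⟨u, hu⟩
      refine ⟨cd * star u * star cd, ?_⟩
      have key := congrArg (fun x => cd * star x * ad) hu
      simp only [star_mul, star_star, mul_assoc] at key ⊢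
      simp only [A1, A1', A2, A2', A3, A3', A4, A4', A5, A5', A6, A6',
        C1, C1', C2, C2', C3, C3', C4, C4', C5, C5', C6, C6'] at key ⊢
      exact key
    · rintro ⟨w, hw⟩
      refine ⟨c * star w * star c, ?_⟩
      have key := congrArg (fun x => star a * star x * star c) hw
      simp only [star_mul, star_star, mul_assoc] at key ⊢
      simp only [A1, A1', A2, A2', A3, A3', A4, A4', A5, A5', A6, A6',
        C1, C1', C2, C2', C3, C3', C4, C4', C5, C5', C6, C6'] at key ⊢
      exact key
  · constructor
    · rintro ⟨u, hu⟩
      refine ⟨a * u * star a, ?_⟩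
      have key := congrArg (fun x => cd * x * star a) hu
      simp only [star_mul, star_star, mul_assoc] at key ⊢
      simp only [A1, A1', A2, A2', A3, A3', A4, A4', A5, A5', A6, A6',
        C1, C1', C2, C2', C3, C3', C4, C4', C5, C5', C6, C6'] at key ⊢
      exact key
    · rintro ⟨v, hv⟩
      refine ⟨ad * v * star ad, ?_⟩
      have key := congrArg (fun x => c * x * star ad) hv
      simp only [star_mul, star_star, mul_assoc] at key ⊢
      simp only [A1, A1', A2, A2', A3, A3', A4, A4', A5, A5', A6, A6',
        C1, C1', C2, C2', C3, C3', C4, C4', C5, C5', C6, C6'] at key ⊢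
      exact key
end

section
/- Let a, b, c, b̃ be elements of a ring with involution such that a and c are Moore-Penrose invertible, and set p = a† a b c c†, q = c c† b̃ a† a. If abc is right *-cancellable, p q = (p q)², q* R ⊆ a*a p R, and c c* p* R ⊆ q R, then abc is Moore-Penrose invertible and (abc)† = c† b̃ a†. -/
variable {R : Type*} [Ring R] [StarRing R]

theorem hartwig_v_implies_i (a b c bt ad cd : R)
    (ha : IsMPInv a ad) (hc : IsMPInv c cd)
    (p : R) (hp : p = ad * a * b * c * cd)
    (q : R) (hq : q = c * cd * bt * ad * a)
    (hcanc : ∀ z : R, z * (a * b * c * star (a * b * c)) = 0 → z * (a * b * c) = 0)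
    (hidem : p * q = (p * q) * (p * q))
    (h1 : ∃ u : R, star q = star a * a * p * u)
    (h2 : ∃ v : R, c * star c * star p = q * v) :
    IsMPInv (a * b * c) (cd * bt * ad) := by
  obtain ⟨ha1, ha2, ha3, ha4⟩ := ha
  obtain ⟨hc1, hc2, hc3, hc4⟩ := hc
  obtain ⟨u, hu⟩ := h1
  obtain ⟨v, hv⟩ := h2
  -- right-assoc forms
  simp only [mul_assoc] at hp hq hu hv
  -- basic lifted rules
  have A1 : ∀ t : R, a * (ad * (a * t)) = a * t := by
    intro t; rw [← mul_assoc, ← mul_assoc, ha1]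
  have A2 : ∀ t : R, ad * (a * (ad * t)) = ad * t := by
    intro t; rw [← mul_assoc, ← mul_assoc, ha2]
  have C1 : ∀ t : R, c * (cd * (c * t)) = c * t := by
    intro t; rw [← mul_assoc, ← mul_assoc, hc1]
  have C2 : ∀ t : R, cd * (c * (cd * t)) = cd * t := by
    intro t; rw [← mul_assoc, ← mul_assoc, hc2]
  have A1b : a * (ad * a) = a := by rw [← mul_assoc, ha1]
  have A2b : ad * (a * ad) = ad := by rw [← mul_assoc, ha2]
  have C1b : c * (cd * c) = c := by rw [← mul_assoc, hc1]
  have SA2b : star ad * (star a * a) = a := by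
    rw [← mul_assoc, ← star_mul, ha3, ha1]
  have SA2 : ∀ t : R, star ad * (star a * (a * t)) = a * t := by
    intro t; rw [← mul_assoc (star a) a t, ← mul_assoc (star ad), SA2b]
  have SC3b : cd * (c * star c) = star c := by
    rw [← mul_assoc, ← hc4, ← star_mul, ← mul_assoc, hc1]
  have SC3 : ∀ t : R, cd * (c * (star c * t)) = star c * t := by
    intro t; rw [← mul_assoc c (star c) t, ← mul_assoc cd, SC3b]

  -- p, q structural rules
  have P1b : ad * (a * p) = p := by rw [hp]; exact A2 _
  have P1 : ∀ t : R, ad * (a * (p * t)) = p * t := by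
    intro t; rw [← mul_assoc a p t, ← mul_assoc ad, P1b]
  have Q1b : c * (cd * q) = q := by rw [hq]; exact C1 _
  have Q1 : ∀ t : R, c * (cd * (q * t)) = q * t := by
    intro t; rw [← mul_assoc cd q t, ← mul_assoc c, Q1b]
  have Q2b : q * (ad * a) = q := by
    rw [hq]; simp only [mul_assoc]; rw [A2]
  have Q2 : ∀ t : R, q * (ad * (a * t)) = q * t := by
    intro t
    calc q * (ad * (a * t)) = (q * (ad * a)) * t := by
          rw [mul_assoc, mul_assoc]
      _ = q * t := by rw [Q2b]
  -- lifted h2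
  have HV : ∀ t : R, c * (star c * (star p * t)) = q * (v * t) := by
    intro t
    rw [← mul_assoc (star c), ← mul_assoc c, hv, mul_assoc]
  -- lifted idempotency
  have HI : ∀ t : R, p * (q * (p * (q * t))) = p * (q * t) := by
    intro t
    calc p * (q * (p * (q * t))) = ((p * q) * (p * q)) * t := by
          simp only [mul_assoc]
      _ = (p * q) * t := by rw [← hidem]
      _ = p * (q * t) := by rw [mul_assoc]
  have APC : a * (p * c) = a * (b * c) := by
    rw [hp]; simp only [mul_assoc]; rw [A1, C1b]
  -- ==== F1 : p*q*p = p  (via cancellation) ====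
  have SY : star (a * (p * c)) = star c * (star p * star a) := by
    simp only [star_mul, mul_assoc]
  have EQQ : (a * (p * (q * ad))) * ((a * (p * c)) * star (a * (p * c)))
      = (a * (p * c)) * star (a * (p * c)) := by
    rw [SY]; simp only [mul_assoc]
    rw [Q2, HV, HI, ← HV]
  have TT : a * b * c * star (a * b * c) = (a * (p * c)) * star (a * (p * c)) := by
    rw [mul_assoc a b c, ← APC]
  have hz := hcanc (a * (p * (q * ad)) - 1)
    (by rw [sub_mul, one_mul, TT, EQQ, sub_self])
  rw [sub_mul, one_mul, sub_eq_zero] at hz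
  -- hz : a * (p * (q * ad)) * (a * b * c) = a * b * c
  have EY : a * (p * (q * (ad * (a * (b * c))))) = a * (b * c) := by
    have := hz; simp only [mul_assoc] at this; exact this
  have F0 : p * (q * (b * c)) = ad * (a * (b * c)) := by
    have h := congrArg (fun w => ad * w) EY
    simp only [P1, Q2] at h
    exact h
  have F1c : p * (q * (b * (c * cd))) = p := by
    have h := congrArg (fun w => w * cd) F0
    simp only [mul_assoc] at h
    rw [h, ← hp]
  have QP : q * p = q * (b * (c * cd)) := by
    rw [hp]; exact Q2 _
  have F1b : p * (q * p) = p := by rw [QP]; exact F1c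
  have F1L : ∀ t : R, p * (q * (p * t)) = p * t := by
    intro t
    calc p * (q * (p * t)) = (p * (q * p)) * t := by simp only [mul_assoc]
      _ = p * t := by rw [F1b]

  -- ==== g := a*(p*(q*ad)) is self-adjoint ====
  have GGs : a * (p * (q * ad)) * star (a * (p * (q * ad)))
      = star (a * (p * (q * ad))) := by
    simp only [star_mul, mul_assoc, hu]
    rw [SA2, Q2, F1L]
  have G3 : star (a * (p * (q * ad))) = a * (p * (q * ad)) := by
    have h := congrArg star GGs
    rw [star_mul, star_star] at h
    rw [← GGs]
    exact h
  have GZ : (a * (p * (q * ad))) * (a * p) = a * p := by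
    simp only [mul_assoc]; rw [Q2, F1b]
  have ZSG : star p * (star a * (a * (p * (q * ad)))) = star p * star a := by
    have h := congrArg star GZ
    rw [star_mul, G3] at h
    rw [star_mul] at h
    simp only [mul_assoc] at h
    exact h
  have QS : q = star u * (star p * (star a * a)) := by
    have h := congrArg star hu
    simp only [star_mul, star_star, mul_assoc] at h
    exact h
  have RA : (a * (p * (q * ad))) * a = a * (p * q) := by
    simp only [mul_assoc]; rw [Q2b]
  -- ==== q * p * q = q ====
  have Q3b : q * (p * q) = q := by
    nth_rewrite 1 [QS]
    simp only [mul_assoc]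
    rw [← RA, ← mul_assoc (star a), ← mul_assoc (star p), ZSG]
    simp only [mul_assoc]
    rw [← QS]
  have Q3L : ∀ t : R, q * (p * (q * t)) = q * t := by
    intro t
    calc q * (p * (q * t)) = (q * (p * q)) * t := by simp only [mul_assoc]
      _ = q * t := by rw [Q3b]
  -- ==== assembly ====
  have XQb : cd * (q * ad) = cd * (bt * ad) := by
    rw [hq]; simp only [mul_assoc]; rw [C2, A2b]
  have ABC : a * b * c = a * (p * c) := by rw [mul_assoc, ← APC]
  have XX : cd * bt * ad = cd * (q * ad) := by rw [mul_assoc, XQb]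
  refine ⟨?_, ?_, ?_, ?_⟩
  · rw [ABC, XX]
    simp only [mul_assoc]
    rw [Q1, Q2, F1L]
  · rw [ABC, XX]
    simp only [mul_assoc]
    rw [Q2, Q1, Q3L]
  · rw [ABC, XX]
    have YK : (a * (p * c)) * (cd * (q * ad)) = a * (p * (q * ad)) := by
      simp only [mul_assoc]; rw [Q1]
    rw [YK]; exact G3
  · rw [ABC, XX]
    have KY : (cd * (q * ad)) * (a * (p * c)) = cd * (q * (p * c)) := by
      simp only [mul_assoc]; rw [Q2]
    rw [KY]
    -- k := cd*(q*(p*c)) : show star k = k via k * star k = star k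
    have KK : cd * (q * (p * c)) * star (cd * (q * (p * c)))
        = star (cd * (q * (p * c))) := by
      simp only [star_mul, mul_assoc]
      rw [HV, Q3L, ← HV, SC3]
    have h := congrArg star KK
    rw [star_mul, star_star] at h
    rw [← KK]
    exact h
end

section
/- Let a, b, c, b̃ be elements of a ring with involution such that a and c are Moore-Penrose invertible, and set p = a† a b c c†, q = c c† b̃ a† a. If abc is Moore-Penrose invertible with (abc)† = c† b̃ a†, then q p q = q and p q p = p (q is a {1,2}-inverse of p), q* R ⊆ a*a p R, and c c* p* R ⊆ q R. -/
variable {R : Type*} [Ring R] [StarRing R]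

theorem hartwig_i_implies_iv (a b c bt ad cd : R)
    (ha : IsMPInv a ad) (hc : IsMPInv c cd)
    (p : R) (hp : p = ad * a * b * c * cd)
    (q : R) (hq : q = c * cd * bt * ad * a)
    (h : IsMPInv (a * b * c) (cd * bt * ad)) :
    q * p * q = q ∧ p * q * p = p ∧
    (∃ u : R, star q = star a * a * p * u) ∧
    (∃ v : R, c * star c * star p = q * v) := by
  obtain ⟨ha1, ha2, ha3, ha4⟩ := ha
  obtain ⟨hc1, hc2, hc3, hc4⟩ := hc
  obtain ⟨h1, h2, h3, h4⟩ := h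
  subst hp hq
  -- associativity-normalized helper rewrite rules
  have ha2' : ∀ x : R, ad * (a * (ad * x)) = ad * x := fun x => by
    rw [← mul_assoc, ← mul_assoc, ha2]
  have hc2' : ∀ x : R, cd * (c * (cd * x)) = cd * x := fun x => by
    rw [← mul_assoc, ← mul_assoc, hc2]
  have h2' : ∀ x : R,
      cd * (bt * (ad * (a * (b * (c * (cd * (bt * (ad * x)))))))) = cd * (bt * (ad * x)) :=
    fun x => by
      have := congrArg (· * x) h2
      simpa only [mul_assoc] using this
  have h1' : ∀ x : R,
      a * (b * (c * (cd * (bt * (ad * (a * (b * (c * x)))))))) = a * (b * (c * x)) :=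
    fun x => by
      have := congrArg (· * x) h1
      simpa only [mul_assoc] using this
  -- star a * a * ad = star a
  have sa : star a * a * ad = star a := by
    rw [mul_assoc, ← ha3, ← star_mul, ha1]
  have sa' : ∀ x : R, star a * (a * (ad * x)) = star a * x := fun x => by
    rw [← mul_assoc, ← mul_assoc, sa]
  -- star c * star cd * star c = star c
  have sc : star c * (star cd * star c) = star c := by
    rw [← star_mul, ← star_mul, hc1]
  have sc' : ∀ x : R, star c * (star cd * (star c * x)) = star c * x := fun x => by
    have := congrArg (· * x) sc
    simpa only [mul_assoc] using this
  -- (abc) * (d * star d) = star d  where d = cd*bt*ad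
  have gd : (a * b * c) * ((cd * bt * ad) * star (cd * bt * ad)) = star (cd * bt * ad) := by
    conv_rhs => rw [← h2, mul_assoc, star_mul, h3]
    exact (mul_assoc _ _ _).symm
  have gd' : ∀ x : R,
      a * (b * (c * (cd * (bt * (ad * (star ad * (star bt * (star cd * x)))))))) =
        star ad * (star bt * (star cd * x)) := fun x => by
    have := congrArg (· * x) gd
    simpa only [mul_assoc, star_mul] using this
  -- d * (g * star g) = star g
  have dg : (cd * bt * ad) * ((a * b * c) * star (a * b * c)) = star (a * b * c) := by
    conv_rhs => rw [← h1, mul_assoc, star_mul, h4]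
    exact (mul_assoc _ _ _).symm
  have dg' : ∀ x : R,
      cd * (bt * (ad * (a * (b * (c * (star c * (star b * (star a * x)))))))) =
        star c * (star b * (star a * x)) := fun x => by
    have := congrArg (· * x) dg
    simpa only [mul_assoc, star_mul] using this
  refine ⟨?_, ?_, ⟨bt * (ad * (star ad * (star bt * (star cd * star c)))), ?_⟩,
    ⟨b * c * (cd * bt * ad) * (a * b * c) * star (a * b * c) * star ad, ?_⟩⟩
  · simp only [mul_assoc]
    rw [ha2', hc2', h2']
  · simp only [mul_assoc]
    rw [hc2', ha2', h1']
  · simp only [star_mul, mul_assoc]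
    rw [sa', gd']
  · simp only [star_mul, mul_assoc]
    rw [sc', h2', dg']
end

section
/- Let a, b, c, b̃ be elements of a ring with involution such that a and c are Moore-Penrose invertible, and set p = a† a b c c†, q = c c† b̃ a† a. If c† b̃ a† is left *-cancellable, p q = (p q)², a*a p R ⊆ q* R, and q R ⊆ c c* p* R, then abc is Moore-Penrose invertible and (abc)† = c† b̃ a†. -/
variable {R : Type*} [Ring R] [StarRing R]

theorem hartwig_dual_v_implies_i (a b c bt ad cd : R)
    (ha : IsMPInv a ad) (hc : IsMPInv c cd)
    (p : R) (hp : p = ad * a * b * c * cd)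
    (q : R) (hq : q = c * cd * bt * ad * a)
    (hcanc : ∀ z : R, star (cd * bt * ad) * (cd * bt * ad) * z = 0 → (cd * bt * ad) * z = 0)
    (hidem : p * q = (p * q) * (p * q))
    (h1 : ∃ u : R, star a * a * p = star q * u)
    (h2 : ∃ v : R, q = c * star c * star p * v) :
    IsMPInv (a * b * c) (cd * bt * ad) := by
  obtain ⟨ha1, ha2, ha3, ha4⟩ := ha
  obtain ⟨hc1, hc2, hc3, hc4⟩ := hc
  obtain ⟨u, hu⟩ := h1
  obtain ⟨v, hv⟩ := h2
  set t := a * b * c with ht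
  set y := cd * bt * ad with hy
  -- contraction lemmas (right-associated forms)
  have ca1 : ∀ z : R, a * (ad * (a * z)) = a * z := fun z => by
    rw [← mul_assoc, ← mul_assoc, ha1]
  have ca2 : ∀ z : R, ad * (a * (ad * z)) = ad * z := fun z => by
    rw [← mul_assoc, ← mul_assoc, ha2]
  have cc1 : ∀ z : R, c * (cd * (c * z)) = c * z := fun z => by
    rw [← mul_assoc, ← mul_assoc, hc1]
  have cc2 : ∀ z : R, cd * (c * (cd * z)) = cd * z := fun z => by
    rw [← mul_assoc, ← mul_assoc, hc2]
  have ta1 : a * (ad * a) = a := by rw [← mul_assoc, ha1]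
  have ta2 : ad * (a * ad) = ad := by rw [← mul_assoc, ha2]
  have tc1 : c * (cd * c) = c := by rw [← mul_assoc, hc1]
  have tc2 : cd * (c * cd) = cd := by rw [← mul_assoc, hc2]
  -- z-versions of hypotheses
  have hut : star a * (a * p) = star q * u := by rw [← mul_assoc, hu]
  have huz : ∀ z : R, star a * (a * (p * z)) = star q * (u * z) := fun z => by
    rw [← mul_assoc, ← mul_assoc, hu, mul_assoc]
  have hvz : ∀ z : R, c * (star c * (star p * (v * z))) = q * z := fun z => by
    rw [← mul_assoc, ← mul_assoc, ← mul_assoc, ← hv]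
  have hid4 : ∀ z : R, p * (q * (p * (q * z))) = p * (q * z) := fun z => by
    rw [show p * (q * (p * (q * z))) = ((p * q) * (p * q)) * z by
      simp only [mul_assoc], ← hidem, mul_assoc]
  -- word lemmas
  have l2a : cd * c * star c = star c := by
    calc cd * c * star c = star (cd * c) * star c := by rw [hc4]
    _ = star (c * (cd * c)) := (star_mul _ _).symm
    _ = star c := by rw [← mul_assoc, hc1]
  have l2az : ∀ z : R, cd * (c * (star c * z)) = star c * z := fun z => by
    rw [← mul_assoc, ← mul_assoc, l2a]
  have hTX : t * y = a * (p * (q * ad)) := by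
    rw [ht, hy, hp, hq]; simp only [mul_assoc, ca1, ca2, cc1, cc2, ta1, ta2, tc1, tc2]
  have hcy : c * y = q * ad := by
    rw [hy, hq]; simp only [mul_assoc, ca1, ca2, cc1, cc2, ta1, ta2, tc1, tc2]
  have hyg : y * (a * ad) = y := by
    rw [hy]; simp only [mul_assoc, ca1, ca2, cc1, cc2, ta1, ta2, tc1, tc2]
  have hadt : ad * t = p * c := by
    rw [ht, hp]; simp only [mul_assoc, ca1, ca2, cc1, cc2, ta1, ta2, tc1, tc2]
  have hapc : a * (p * c) = t := by
    rw [ht, hp]; simp only [mul_assoc, ca1, ca2, cc1, cc2, ta1, ta2, tc1, tc2]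
  have hadty : ad * (t * y) = p * (q * ad) := by
    rw [ht, hy, hp, hq]; simp only [mul_assoc, ca1, ca2, cc1, cc2, ta1, ta2, tc1, tc2]
  -- x = c* p* v ad
  have hx2 : star c * (star p * (v * ad)) = y := by
    calc star c * (star p * (v * ad))
        = cd * (c * (star c * (star p * (v * ad)))) := (l2az _).symm
      _ = cd * (q * ad) := by rw [hvz ad]
      _ = y := by
          rw [hy, hq]; simp only [mul_assoc, ca1, ca2, cc1, cc2, ta1, ta2, tc1, tc2]
  have hys : star y = star ad * (star v * (p * c)) := by
    rw [← hx2]; simp only [star_mul, star_star, mul_assoc]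
  have hyy : star y * y = star ad * (star v * (p * (q * ad))) := by
    calc star y * y = star ad * (star v * (p * (c * y))) := by
          rw [hys]; simp only [mul_assoc]
      _ = star ad * (star v * (p * (q * ad))) := by rw [hcy]
  -- Equation 2 : y (t y) = y
  have key : star y * y * (t * y) = star y * y * (a * ad) := by
    calc star y * y * (t * y)
        = star ad * (star v * (p * (q * (ad * (t * y))))) := by
          rw [hyy]; simp only [mul_assoc]
      _ = star ad * (star v * (p * (q * (p * (q * ad))))) := by rw [hadty]
      _ = star ad * (star v * (p * (q * ad))) := by rw [hid4 ad]
      _ = star ad * (star v * (p * (q * (ad * (a * ad))))) := by rw [ta2]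
      _ = star y * y * (a * ad) := by rw [hyy]; simp only [mul_assoc]
  have main1 : y * (t * y) = y := by
    have h0 : star y * y * (t * y - a * ad) = 0 := by
      rw [mul_sub, key, sub_self]
    have h1' := hcanc _ h0
    rw [mul_sub, sub_eq_zero] at h1'
    rw [h1', hyg]
  have qpq : q * (p * q) = q := by
    calc q * (p * q) = c * (y * ((t * y) * a)) := by
          rw [ht, hy, hp, hq]; simp only [mul_assoc, ca1, ca2, cc1, cc2, ta1, ta2, tc1, tc2]
      _ = c * (y * a) := by
          rw [show y * ((t * y) * a) = (y * (t * y)) * a by simp only [mul_assoc],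
            main1]
      _ = q := by
          rw [hy, hq]; simp only [mul_assoc, ca1, ca2, cc1, cc2, ta1, ta2, tc1, tc2]
  have sqz : ∀ z : R, star q * (star p * (star q * z)) = star q * z := fun z => by
    have h : star q * star p * star q = star q := by
      rw [show star q * star p * star q = star (q * (p * q)) by
        simp only [star_mul, mul_assoc], qpq]
    rw [← mul_assoc, ← mul_assoc, h]
  -- Equation 3 : star (t y) = t y
  have hA : star (t * y) * (t * y) = t * y := by
    calc star (t * y) * (t * y)
        = star ad * (star q * (star p * (star a * (a * (p * (q * ad)))))) := by
          rw [hTX]; simp only [star_mul, mul_assoc]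
      _ = star ad * (star q * (star p * (star q * (u * (q * ad))))) := by
          rw [huz (q * ad)]
      _ = star ad * (star q * (u * (q * ad))) := by rw [sqz (u * (q * ad))]
      _ = star ad * (star a * (a * (p * (q * ad)))) := by rw [← huz (q * ad)]
      _ = star (a * ad) * (a * (p * (q * ad))) := by
          rw [star_mul a ad]; simp only [mul_assoc]
      _ = (a * ad) * (a * (p * (q * ad))) := by rw [ha3]
      _ = a * (p * (q * ad)) := by simp only [mul_assoc, ca1]
      _ = t * y := hTX.symm
  have main2 : star (t * y) = t * y := by
    calc star (t * y) = star (star (t * y) * (t * y)) := by rw [hA]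
      _ = star (t * y) * star (star (t * y)) := star_mul _ _
      _ = star (t * y) * (t * y) := by rw [star_star]
      _ = t * y := hA
  -- Equation 1 : t y t = t
  have hTXy : t * y * star y = star y := by
    calc t * y * star y = star (y * star (t * y)) := by
          rw [star_mul y (star (t * y)), star_star]
      _ = star (y * (t * y)) := by rw [main2]
      _ = star y := by rw [main1]
  have hap : star y * (star c * u) = a * p := by
    calc star y * (star c * u) = star (c * y) * u := by
          rw [star_mul c y]; simp only [mul_assoc]
      _ = star (q * ad) * u := by rw [hcy]
      _ = star ad * (star q * u) := by rw [star_mul q ad]; simp only [mul_assoc]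
      _ = star ad * (star a * (a * p)) := by rw [← hut]
      _ = star (a * ad) * (a * p) := by rw [star_mul a ad]; simp only [mul_assoc]
      _ = (a * ad) * (a * p) := by rw [ha3]
      _ = a * p := by simp only [mul_assoc, ca1]
  have hT2 : t = star y * (star c * (u * c)) := by
    calc t = a * (p * c) := hapc.symm
      _ = (a * p) * c := by rw [mul_assoc]
      _ = (star y * (star c * u)) * c := by rw [← hap]
      _ = star y * (star c * (u * c)) := by simp only [mul_assoc]
  have main3 : t * y * t = t := by
    calc t * y * t = t * y * (star y * (star c * (u * c))) := by rw [← hT2]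
      _ = (t * y * star y) * (star c * (u * c)) := by simp only [mul_assoc]
      _ = star y * (star c * (u * c)) := by rw [hTXy]
      _ = t := hT2.symm
  -- Equation 4 : star (y t) = y t
  have pqpc : p * (q * (p * c)) = p * c := by
    calc p * (q * (p * c)) = ad * (t * (y * t)) := by
          rw [ht, hy, hp, hq]; simp only [mul_assoc, ca1, ca2, cc1, cc2, ta1, ta2, tc1, tc2]
      _ = ad * t := by
          rw [show ad * (t * (y * t)) = ad * (t * y * t) by simp only [mul_assoc],
            main3]
      _ = p * c := hadt
  have hyyt : star y * (y * t) = star y := by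
    calc star y * (y * t)
        = star ad * (star v * (p * (q * (ad * t)))) := by
          rw [show star y * (y * t) = (star y * y) * t by simp only [mul_assoc],
            hyy]
          simp only [mul_assoc]
      _ = star ad * (star v * (p * (q * (p * c)))) := by rw [hadt]
      _ = star ad * (star v * (p * c)) := by rw [pqpc]
      _ = star y := hys.symm
  have sA : star (y * t) * (y * t) = star (y * t) := by
    calc star (y * t) * (y * t) = star t * (star y * (y * t)) := by
          rw [star_mul y t]; simp only [mul_assoc]
      _ = star t * star y := by rw [hyyt]
      _ = star (y * t) := (star_mul _ _).symm
  have main4 : star (y * t) = y * t := by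
    have h : y * t = star (y * t) := by
      calc y * t = star (star (y * t)) := (star_star _).symm
        _ = star (star (y * t) * (y * t)) := by rw [sA]
        _ = star (y * t) * star (star (y * t)) := star_mul _ _
        _ = star (y * t) * (y * t) := by rw [star_star]
        _ = star (y * t) := sA
    exact h.symm
  refine ⟨main3, ?_, main2, main4⟩
  rw [mul_assoc]; exact main1
end

section
/- Let a, b, c, b̃ be elements of a ring with involution with a, c Moore-Penrose invertible, p = a† a b c c†, q = c c† b̃ a† a. If q p q = q (q is a {2}-inverse of p), a*a p R ⊆ q* R, and c c* p* R ⊆ q R, then abc is Moore-Penrose invertible and (abc)† = c† b̃ a†. -/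
variable {R : Type*} [Ring R] [StarRing R]

theorem hartwig_outer_implies_i (a b c bt ad cd : R)
    (ha : IsMPInv a ad) (hc : IsMPInv c cd)
    (p : R) (hp : p = ad * a * b * c * cd)
    (q : R) (hq : q = c * cd * bt * ad * a)
    (houter : q * p * q = q)
    (h1 : ∃ u : R, star a * a * p = star q * u)
    (h2 : ∃ v : R, c * star c * star p = q * v) :
    IsMPInv (a * b * c) (cd * bt * ad) := by
  obtain ⟨ha1, ha2, ha3, ha4⟩ := ha
  obtain ⟨hc1, hc2, hc3, hc4⟩ := hc
  obtain ⟨u, h1⟩ := h1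
  obtain ⟨v, h2⟩ := h2
  -- star facts
  have saad : star ad * star a = a * ad := by rw [← star_mul, ha3]
  have scdc : star c * star cd = cd * c := by rw [← star_mul, hc4]
  -- absorption helpers
  have HA : ∀ x : R, a * (ad * (a * x)) = a * x := fun x => by
    rw [← mul_assoc, ← mul_assoc, ha1]
  have HAd : ∀ x : R, ad * (a * (ad * x)) = ad * x := fun x => by
    rw [← mul_assoc, ← mul_assoc, ha2]
  have HC : ∀ x : R, c * (cd * (c * x)) = c * x := fun x => by
    rw [← mul_assoc, ← mul_assoc, hc1]
  have HCd : ∀ x : R, cd * (c * (cd * x)) = cd * x := fun x => by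
    rw [← mul_assoc, ← mul_assoc, hc2]
  have hada : ad * (a * ad) = ad := by rw [← mul_assoc, ha2]
  have hcc : c * (cd * c) = c := by rw [← mul_assoc, hc1]
  have SAAD : ∀ x : R, star ad * (star a * x) = a * (ad * x) := fun x => by
    rw [← mul_assoc, saad, mul_assoc]
  -- p, q absorption
  have EP : ∀ x : R, ad * (a * (p * x)) = p * x := fun x => by
    rw [hp]; simp only [mul_assoc]; rw [HAd]
  have ep0 : ad * (a * p) = p := by
    rw [hp]; simp only [mul_assoc]; rw [HAd]
  have FQ : ∀ x : R, c * (cd * (q * x)) = q * x := fun x => by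
    rw [hq]; simp only [mul_assoc]; rw [HC]
  have QPQ : ∀ x : R, q * (p * (q * x)) = q * x := fun x => by
    rw [← mul_assoc, ← mul_assoc, houter]
  -- product forms
  have A_eq : a * (p * c) = a * b * c := by
    rw [hp]; simp only [mul_assoc]; rw [HA, hcc]
  have X_eq : cd * (q * ad) = cd * bt * ad := by
    rw [hq]; simp only [mul_assoc]; rw [HCd, hada]
  have AX_eq : (a * b * c) * (cd * bt * ad) = a * (p * (q * ad)) := by
    rw [hp, hq]; simp only [mul_assoc]; rw [HA, HC, hada]
  have XA_eq : (cd * bt * ad) * (a * b * c) = cd * (q * (p * c)) := by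
    rw [hq, hp]; simp only [mul_assoc]; rw [HCd, HAd, hcc]
  -- re-associated hypotheses
  have h1' : star a * (a * p) = star q * u := by rw [mul_assoc] at h1; exact h1
  have h2' : c * (star c * star p) = q * v := by rw [mul_assoc] at h2; exact h2
  have hq2 : star q * star p * star q = star q := by
    have h := congrArg star houter
    rw [star_mul, star_mul, ← mul_assoc] at h
    exact h
  -- key cancellation lemmas (a-side)
  have K1 : star q * (star p * (star a * (a * p))) = star a * (a * p) := by
    rw [h1', ← mul_assoc, ← mul_assoc, hq2]
  have K2 : star q * (star p * (star a * (a * (p * q)))) = star a * (a * (p * q)) := by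
    have h : star q * (star p * (star a * (a * p))) * q = star a * (a * p) * q := by rw [K1]
    simpa only [mul_assoc] using h
  have K3 : star q * (star p * (star a * a)) = star a * (a * (p * q)) := by
    have h := congrArg star K2
    simp only [star_mul, star_star, mul_assoc] at h
    rw [K2] at h
    exact h.symm
  -- key cancellation lemmas (c-side)
  have K1m : q * (p * (c * (star c * star p))) = c * (star c * star p) := by
    rw [h2', QPQ]
  have K2m' : p * (c * (star c * (star p * star q))) = p * (c * star c) := by
    have h := congrArg star K1m
    simp only [star_mul, star_star, mul_assoc] at h
    exact h
  have K2m : q * (p * (c * (star c * (star p * star q)))) = q * (p * (c * star c)) := by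
    rw [K2m']
  have K3m : c * (star c * (star p * star q)) = q * (p * (c * star c)) := by
    have h := congrArg star K2m
    simp only [star_mul, star_star, mul_assoc] at h
    rw [K2m] at h
    exact h.symm
  -- p q p = p
  have step1 : ad * (star ad * (star q * (star p * (star a * a)))) = p * q := by
    rw [K3, SAAD, HAd, EP]
  have P1 : p * q * p = p := by
    calc p * q * p = (ad * (star ad * (star q * (star p * (star a * a))))) * p := by rw [step1]
      _ = ad * (star ad * (star q * (star p * (star a * (a * p))))) := by simp only [mul_assoc]
      _ = ad * (star ad * (star a * (a * p))) := by rw [K1]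
      _ = ad * (a * (ad * (a * p))) := by rw [SAAD]
      _ = ad * (a * p) := by rw [HAd]
      _ = p := ep0
  -- side identities for symmetry
  have S1 : star a * (a * ad) = star a := by
    rw [← ha3, ← star_mul, ha1]
  have S2 : cd * (c * star c) = star c := by
    rw [← mul_assoc, ← hc4, ← star_mul, hcc]
  have S3 : c * (star c * star cd) = c := by
    rw [scdc, hcc]
  refine ⟨?_, ?_, ?_, ?_⟩
  · -- A X A = A
    rw [AX_eq, ← A_eq]
    calc (a * (p * (q * ad))) * (a * (p * c))
        = a * (p * (q * (ad * (a * (p * c))))) := by simp only [mul_assoc]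
      _ = a * (p * (q * (p * c))) := by rw [EP]
      _ = a * (p * q * p * c) := by simp only [mul_assoc]
      _ = a * (p * c) := by rw [P1]
  · -- X A X = X
    rw [XA_eq, ← X_eq]
    calc (cd * (q * (p * c))) * (cd * (q * ad))
        = cd * (q * (p * (c * (cd * (q * ad))))) := by simp only [mul_assoc]
      _ = cd * (q * (p * (q * ad))) := by rw [FQ]
      _ = cd * (q * ad) := by rw [QPQ]
  · -- star (A X) = A X
    rw [AX_eq]
    calc star (a * (p * (q * ad)))
        = star ad * (star q * (star p * star a)) := by simp only [star_mul, mul_assoc]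
      _ = star ad * (star q * (star p * (star a * (a * ad)))) := by rw [S1]
      _ = star ad * ((star q * (star p * (star a * a))) * ad) := by simp only [mul_assoc]
      _ = star ad * ((star a * (a * (p * q))) * ad) := by rw [K3]
      _ = (star ad * star a) * (a * (p * (q * ad))) := by simp only [mul_assoc]
      _ = (a * ad) * (a * (p * (q * ad))) := by rw [saad]
      _ = a * (p * (q * ad)) := by rw [mul_assoc, HA]
  · -- star (X A) = X A
    rw [XA_eq]
    calc star (cd * (q * (p * c)))
        = star c * (star p * (star q * star cd)) := by simp only [star_mul, mul_assoc]
      _ = (cd * (c * star c)) * (star p * (star q * star cd)) := by rw [S2]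
      _ = cd * ((c * (star c * (star p * star q))) * star cd) := by simp only [mul_assoc]
      _ = cd * ((q * (p * (c * star c))) * star cd) := by rw [K3m]
      _ = cd * (q * (p * (c * (star c * star cd)))) := by simp only [mul_assoc]
      _ = cd * (q * (p * c)) := by rw [S3]
end

section
/- Let a, b, c, b̃ be elements of a ring with involution with a, c Moore-Penrose invertible, p = a† a b c c†, q = c c† b̃ a† a. If p q p = p (q is a {1}-inverse of p), q* R ⊆ a*a p R, and q R ⊆ c c* p* R, then abc is Moore-Penrose invertible and (abc)† = c† b̃ a†. -/
variable {R : Type*} [Ring R] [StarRing R]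

theorem hartwig_inner_implies_i (a b c bt ad cd : R)
    (ha : IsMPInv a ad) (hc : IsMPInv c cd)
    (p : R) (hp : p = ad * a * b * c * cd)
    (q : R) (hq : q = c * cd * bt * ad * a)
    (hinner : p * q * p = p)
    (h1 : ∃ u : R, star q = star a * a * p * u)
    (h2 : ∃ v : R, q = c * star c * star p * v) :
    IsMPInv (a * b * c) (cd * bt * ad) := by
  obtain ⟨ha1, ha2, ha3, ha4⟩ := ha
  obtain ⟨hc1, hc2, hc3, hc4⟩ := hc
  obtain ⟨u, hu⟩ := h1
  obtain ⟨v, hv⟩ := h2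
  -- basic reduction lemmas
  have L1 : ∀ x : R, a * (ad * (a * x)) = a * x := fun x => by
    rw [← mul_assoc, ← mul_assoc, ha1]
  have L2 : ∀ x : R, ad * (a * (ad * x)) = ad * x := fun x => by
    rw [← mul_assoc, ← mul_assoc, ha2]
  have M1 : ∀ x : R, c * (cd * (c * x)) = c * x := fun x => by
    rw [← mul_assoc, ← mul_assoc, hc1]
  have M2 : ∀ x : R, cd * (c * (cd * x)) = cd * x := fun x => by
    rw [← mul_assoc, ← mul_assoc, hc2]
  have L1' : a * (ad * a) = a := by rw [← mul_assoc, ha1]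
  have L2' : ad * (a * ad) = ad := by rw [← mul_assoc, ha2]
  have M1' : c * (cd * c) = c := by rw [← mul_assoc, hc1]
  have M2' : cd * (c * cd) = cd := by rw [← mul_assoc, hc2]
  have SA1 : ∀ x : R, star ad * (star a * x) = a * (ad * x) := fun x => by
    rw [← mul_assoc, ← star_mul, ha3, mul_assoc]
  have G1' : star a * (a * ad) = star a := by
    conv_lhs => rw [← ha3, ← star_mul, ha1]
  have G2t : cd * c * star c = star c := by
    conv_lhs => rw [← hc4, ← star_mul, ← mul_assoc, hc1]
  have G2c : ∀ x : R, cd * (c * (star c * x)) = star c * x := fun x => by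
    rw [← mul_assoc, ← mul_assoc, G2t]
  -- q in "star" form
  have hq2 : q = star u * (star p * (star a * a)) := by
    have h := congrArg star hu
    simpa only [star_mul, star_star, mul_assoc] using h
  -- inner inverse identities with substitutions
  have hA : p * (c * (star c * (star p * (v * p)))) = p := by
    have h := hinner
    rw [hv] at h
    simpa only [mul_assoc] using h
  have A'c : ∀ x : R, p * (c * (star c * (star p * (v * (p * x))))) = p * x := fun x => by
    have h := congrArg (· * x) hA
    simpa only [mul_assoc] using h
  have hB : star p * (star a * (a * (p * (u * star p)))) = star p := by
    have h := congrArg star hinner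
    simp only [star_mul, mul_assoc] at h
    rw [hu] at h
    simpa only [mul_assoc] using h
  have B'c : ∀ x : R, star p * (star a * (a * (p * (u * (star p * x))))) = star p * x :=
    fun x => by
    have h := congrArg (· * x) hB
    simpa only [mul_assoc] using h
  have hB'' : p * (star u * (star p * (star a * (a * p)))) = p := by
    have h := congrArg star hB
    simpa only [star_mul, star_star, mul_assoc] using h
  have B''c : ∀ x : R, p * (star u * (star p * (star a * (a * (p * x))))) = p * x :=
    fun x => by
    have h := congrArg (· * x) hB''
    simpa only [mul_assoc] using h
  -- T = a p q ad is self-adjoint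
  have hT1 : a * (p * (q * ad)) = a * (p * (star u * (star p * star a))) := by
    rw [hq2]
    simp only [mul_assoc]
    rw [G1']
  have hT2 : star (a * (p * (q * ad))) = a * (p * (u * (star p * star a))) := by
    simp only [star_mul, mul_assoc]
    rw [hu]
    simp only [mul_assoc]
    rw [SA1, L1]
  have hTT : a * (p * (q * ad)) * star (a * (p * (q * ad))) = a * (p * (q * ad)) := by
    rw [hT2, hT1]
    simp only [mul_assoc]
    rw [B'c]
  have hTsa : star (a * (p * (q * ad))) = a * (p * (q * ad)) := by
    conv_lhs => rw [← hTT]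
    rw [star_mul, star_star, hTT]
  -- the symmetry identity (C)
  have hC : a * (p * (u * (star p * star a))) = a * (p * (star u * (star p * star a))) := by
    rw [← hT2, ← hT1]
    exact hTsa
  have hCc : ∀ x : R, a * (p * (u * (star p * (star a * x))))
      = a * (p * (star u * (star p * (star a * x)))) := fun x => by
    have h := congrArg (· * x) hC
    simpa only [mul_assoc] using h
  -- q p q = q
  have hq3 : star q * (star p * star q) = star q := by
    rw [hu]
    simp only [mul_assoc]
    rw [hCc, B''c]
  have hqpq : q * (p * q) = q := by
    have h := congrArg star hq3
    simpa only [star_mul, star_star, mul_assoc] using h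
  -- S = cd q p c is self-adjoint
  have hS1 : cd * (q * (p * c)) = star c * (star p * (v * (p * c))) := by
    rw [hv]
    simp only [mul_assoc]
    rw [G2c]
  have hS2 : star (cd * (q * (p * c))) = star c * (star p * (star v * (p * c))) := by
    rw [hS1]
    simp only [star_mul, star_star, mul_assoc]
  have hSS : star (cd * (q * (p * c))) * (cd * (q * (p * c))) = star (cd * (q * (p * c))) := by
    rw [hS2, hS1]
    simp only [mul_assoc]
    rw [A'c]
  have hSsa : star (cd * (q * (p * c))) = cd * (q * (p * c)) := by
    have h := congrArg star hSS
    rw [star_mul, star_star] at h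
    rw [hSS] at h
    exact h
  refine ⟨?_, ?_, ?_, ?_⟩
  · -- X Y X = X
    simp only [mul_assoc]
    have e1 : a * (p * (q * (p * c))) = a * (p * c) := by
      have h := congrArg (fun z : R => a * (z * c)) hinner
      simpa only [mul_assoc] using h
    have e2 : a * (p * (q * (p * c)))
        = a * (b * (c * (cd * (bt * (ad * (a * (b * c))))))) := by
      rw [hp, hq]
      simp only [mul_assoc]
      simp only [L1, L2, M1, M2, L1', L2', M1', M2']
    have e3 : a * (p * c) = a * (b * c) := by
      rw [hp]
      simp only [mul_assoc]
      simp only [L1, M1']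
    rw [← e2, e1, e3]
  · -- Y X Y = Y
    simp only [mul_assoc]
    have f1 : cd * (q * (p * (q * ad))) = cd * (q * ad) := by
      have h := congrArg (fun z : R => cd * (z * ad)) hqpq
      simpa only [mul_assoc] using h
    have f2 : cd * (q * (p * (q * ad)))
        = cd * (bt * (ad * (a * (b * (c * (cd * (bt * ad))))))) := by
      rw [hp, hq]
      simp only [mul_assoc]
      simp only [L1, L2, M1, M2, L1', L2', M1', M2']
    have f3 : cd * (q * ad) = cd * (bt * ad) := by
      rw [hq]
      simp only [mul_assoc]
      simp only [L1, L2, M1, M2, L1', L2', M1', M2']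
    rw [← f2, f1, f3]
  · -- star (X Y) = X Y
    have hXY : a * b * c * (cd * bt * ad) = a * (p * (q * ad)) := by
      rw [hp, hq]
      simp only [mul_assoc]
      simp only [L1, L2, M1, M2, L1', L2', M1', M2']
    rw [hXY]
    exact hTsa
  · -- star (Y X) = Y X
    have hYX : cd * bt * ad * (a * b * c) = cd * (q * (p * c)) := by
      rw [hp, hq]
      simp only [mul_assoc]
      simp only [L1, L2, M1, M2, L1', L2', M1', M2']
    rw [hYX]
    exact hSsa
end
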